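/- Let A ∈ SL₂$ be a Clifford matrix. (i) If A is a parabolic translation and Aκ = κx for some quaternionic spinor κ and some x ∈ ℍ, then x = 1. (ii) A is a parabolic translation if and only if A ≠ 1 and there exists a quaternionic spinor κ with Aκ = κ. -/

import Mathlib

open Quaternion

noncomputable section

/-- The involution `q* = a + bi + cj - dk` on quaternions (Clifford reversion). -/
def qstar (q : ℍ[ℝ]) : ℍ[ℝ] := ⟨q.re, q.imI, q.imJ, -q.imK⟩

/-- The involution `q' = a - bi - cj + dk` on quaternions. -/
def qprime (q : ℍ[ℝ]) : ℍ[ℝ] := ⟨q.re, -q.imI, -q.imJ, q.imK⟩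

/-- A paravector is an element of `ℝ + ℝi + ℝj`, i.e. a quaternion with zero `k`-component. -/
def IsParavector (q : ℍ[ℝ]) : Prop := q.imK = 0

/-- The quaternion `k`. -/
def qk : ℍ[ℝ] := ⟨0, 0, 0, 1⟩

/-- A quaternionic spinor: a pair `(ξ, η) ≠ (0,0)` with `ξ * conj η` a paravector. -/
def IsSpinor (κ : ℍ[ℝ] × ℍ[ℝ]) : Prop := κ ≠ 0 ∧ IsParavector (κ.1 * star κ.2)

/-- The bracket `{κ₁, κ₂} = ξ₁* η₂ − η₁* ξ₂`. -/
def bracket (κ₁ κ₂ : ℍ[ℝ] × ℍ[ℝ]) : ℍ[ℝ] := qstar κ₁.1 * κ₂.2 - qstar κ₁.2 * κ₂.1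

/-- Right multiplication `κ x = (ξ x, η x)`. -/
def rmul (κ : ℍ[ℝ] × ℍ[ℝ]) (x : ℍ[ℝ]) : ℍ[ℝ] × ℍ[ℝ] := (κ.1 * x, κ.2 * x)

/-- The complementary pair `κ̌ = (η', −ξ')`. -/
def qcheck (κ : ℍ[ℝ] × ℍ[ℝ]) : ℍ[ℝ] × ℍ[ℝ] := (qprime κ.2, -qprime κ.1)

/-- The real inner product on `ℍ²`: `⟨κ₁, κ₂⟩ = Re (ξ₁ ξ̄₂ + η₁ η̄₂)`. -/
def qinner (κ₁ κ₂ : ℍ[ℝ] × ℍ[ℝ]) : ℝ := (κ₁.1 * star κ₂.1 + κ₁.2 * star κ₂.2).re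

/-- The squared norm `|κ|² = |ξ|² + |η|²` on `ℍ²`. -/
def qnsq (κ : ℍ[ℝ] × ℍ[ℝ]) : ℝ := Quaternion.normSq κ.1 + Quaternion.normSq κ.2

/-- The pseudo-determinant of a 2×2 quaternionic matrix: `pdet [[a,b],[c,d]] = a* d − c* b`. -/
def pdet (A : Matrix (Fin 2) (Fin 2) ℍ[ℝ]) : ℍ[ℝ] := qstar (A 0 0) * A 1 1 - qstar (A 1 0) * A 0 1

/-- A Clifford matrix: columns are quaternionic spinors and the pseudo-determinant is 1. -/
def IsClifford (A : Matrix (Fin 2) (Fin 2) ℍ[ℝ]) : Prop :=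
  IsSpinor (A 0 0, A 1 0) ∧ IsSpinor (A 0 1, A 1 1) ∧ pdet A = 1

/-- Matrix-vector action of a 2×2 quaternionic matrix on a column vector in `ℍ²`. -/
def mact (A : Matrix (Fin 2) (Fin 2) ℍ[ℝ]) (κ : ℍ[ℝ] × ℍ[ℝ]) : ℍ[ℝ] × ℍ[ℝ] :=
  (A 0 0 * κ.1 + A 0 1 * κ.2, A 1 0 * κ.1 + A 1 1 * κ.2)

/-- A parabolic translation: a Clifford matrix `A ≠ 1` with `(A − 1)² = 0`. -/
def IsParabolic (A : Matrix (Fin 2) (Fin 2) ℍ[ℝ]) : Prop := A ≠ 1 ∧ (A - 1) ^ 2 = 0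

/-!
Put `N = A - 1`, so that `A` is parabolic iff `N ≠ 0` and `N² = 0`, and `Aκ = κx` reads
`Nκ = κ(x - 1)`.

(i) Applying `N` twice gives `0 = N²κ = κ(x - 1)²`; since `κ ≠ 0` and `ℍ` has no nilpotents, `x = 1`.

(ii) If `N² = 0`, the first column `(a - 1, c)` of `N` is fixed by `A`. Multiplying the
pseudo-determinant identity `a* d - c* b = 1` on the right by `c` and using the entries of `N² = 0`
together with `a* c = c* a` (which is the spinor condition on `(a, c)`) gives `c* = c`, so this
column is a spinor unless it vanishes; if it does, `(1, 0)` is a fixed spinor.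
Conversely, a fixed spinor `(ξ, η)` with `η = 0` forces `A = [[1, b], [0, 1]]`, and one with `η ≠ 0`
is `(v, 1) η` for the paravector `v = ξ η⁻¹`; the fixed-point equations and the pseudo-determinant
then give `N = (v, 1)ᵀ c (1, -v)`, whose square vanishes because `(1, -v) (v, 1)ᵀ = 0`.
-/

@[simp] lemma re_qstar (q : ℍ[ℝ]) : (qstar q).re = q.re := rfl
@[simp] lemma imI_qstar (q : ℍ[ℝ]) : (qstar q).imI = q.imI := rfl
@[simp] lemma imJ_qstar (q : ℍ[ℝ]) : (qstar q).imJ = q.imJ := rfl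
@[simp] lemma imK_qstar (q : ℍ[ℝ]) : (qstar q).imK = -q.imK := rfl

lemma qstar_mul (p q : ℍ[ℝ]) : qstar (p * q) = qstar q * qstar p := by
  ext <;> simp <;> ring

lemma qstar_sub (p q : ℍ[ℝ]) : qstar (p - q) = qstar p - qstar q := by
  ext <;> simp
  ring

@[simp] lemma qstar_one : qstar 1 = 1 := by
  ext <;> simp

@[simp] lemma qstar_zero : qstar 0 = 0 := by
  ext <;> simp

@[simp] lemma qstar_qstar (q : ℍ[ℝ]) : qstar (qstar q) = q := by
  ext <;> simp

lemma isParavector_iff_qstar_eq_self {q : ℍ[ℝ]} : IsParavector q ↔ qstar q = q := by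
  rw [IsParavector, Quaternion.ext_iff]
  simp only [re_qstar, imI_qstar, imJ_qstar, imK_qstar, true_and, neg_eq_self]

lemma IsParavector.mul_inv {ξ η : ℍ[ℝ]} (h : IsParavector (ξ * star η)) :
    IsParavector (ξ * η⁻¹) := by
  rw [IsParavector] at h ⊢
  rw [Quaternion.inv_def, mul_smul_comm, Quaternion.imK_smul, h, smul_zero]

lemma IsParavector.sub_one_mul_star {a c : ℍ[ℝ]} (hac : IsParavector (a * star c))
    (hc : IsParavector c) : IsParavector ((a - 1) * star c) := by
  rw [IsParavector] at hac hc ⊢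
  rw [sub_mul, one_mul, Quaternion.imK_sub, Quaternion.imK_star, hac, hc, neg_zero, sub_zero]

lemma qstar_mul_comm_of_isParavector {a c : ℍ[ℝ]} (h : IsParavector (a * star c)) :
    qstar a * c = qstar c * a := by
  rw [IsParavector, Quaternion.imK_mul] at h
  ext <;> simp at h ⊢ <;> linarith

section Matrix

variable {R : Type*} [Ring R]

lemma sub_one_fin_two (A : Matrix (Fin 2) (Fin 2) R) :
    A - 1 = !![A 0 0 - 1, A 0 1; A 1 0, A 1 1 - 1] := by
  rw [Matrix.eta_fin_two A, Matrix.one_fin_two]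
  simp

lemma sq_fin_two_upper_eq_zero (b : R) : !![0, b; 0, 0] ^ 2 = 0 := by
  rw [sq, Matrix.mul_fin_two]
  simp [← Matrix.ext_iff, Fin.forall_fin_two]

lemma sq_fin_two_rank_one_eq_zero (v c : R) : !![v * c, -(v * c * v); c, -(c * v)] ^ 2 = 0 := by
  rw [sq, Matrix.mul_fin_two, ← Matrix.ext_iff]
  simp only [Fin.forall_fin_two, Matrix.of_apply, Matrix.cons_val_zero, Matrix.cons_val_one,
    Matrix.zero_apply]
  refine ⟨⟨?_, ?_⟩, ?_, ?_⟩ <;> noncomm_ring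

end Matrix

section Action

variable (A B : Matrix (Fin 2) (Fin 2) ℍ[ℝ]) (κ : ℍ[ℝ] × ℍ[ℝ])

@[simp] lemma fst_mact : (mact A κ).1 = A 0 0 * κ.1 + A 0 1 * κ.2 := rfl
@[simp] lemma snd_mact : (mact A κ).2 = A 1 0 * κ.1 + A 1 1 * κ.2 := rfl
@[simp] lemma fst_rmul (x : ℍ[ℝ]) : (rmul κ x).1 = κ.1 * x := rfl
@[simp] lemma snd_rmul (x : ℍ[ℝ]) : (rmul κ x).2 = κ.2 * x := rfl

lemma mact_mul : mact (A * B) κ = mact A (mact B κ) := by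
  ext <;> simp [Matrix.mul_apply, Fin.sum_univ_two] <;> noncomm_ring

lemma mact_zero : mact 0 κ = 0 := by
  ext <;> simp

lemma mact_sub_one : mact (A - 1) κ = mact A κ - κ := by
  ext <;> simp <;> noncomm_ring

lemma mact_eq_self_iff : mact A κ = κ ↔ mact (A - 1) κ = 0 := by
  rw [mact_sub_one, sub_eq_zero]

lemma mact_rmul (x : ℍ[ℝ]) : mact A (rmul κ x) = rmul (mact A κ) x := by
  ext <;> simp <;> noncomm_ring

lemma rmul_rmul (x y : ℍ[ℝ]) : rmul (rmul κ x) y = rmul κ (x * y) := by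
  ext <;> simp [mul_assoc]

lemma rmul_sub_self (x : ℍ[ℝ]) : rmul κ x - κ = rmul κ (x - 1) := by
  ext <;> simp [mul_sub]

lemma rmul_eq_zero_iff {κ : ℍ[ℝ] × ℍ[ℝ]} (hκ : κ ≠ 0) {x : ℍ[ℝ]} : rmul κ x = 0 ↔ x = 0 := by
  refine ⟨fun h => ?_, fun h => by ext <;> simp [h]⟩
  by_contra hx
  refine hκ (Prod.ext ?_ ?_)
  · exact (mul_eq_zero.mp (congrArg Prod.fst h)).resolve_right hx
  · exact (mul_eq_zero.mp (congrArg Prod.snd h)).resolve_right hx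

end Action

lemma eq_one_of_mact_eq_rmul {A : Matrix (Fin 2) (Fin 2) ℍ[ℝ]} (hA : (A - 1) ^ 2 = 0)
    {κ : ℍ[ℝ] × ℍ[ℝ]} (hκ : κ ≠ 0) {x : ℍ[ℝ]} (hfix : mact A κ = rmul κ x) : x = 1 := by
  have hN : mact (A - 1) κ = rmul κ (x - 1) := by
    rw [mact_sub_one, hfix, rmul_sub_self]
  have hsq : rmul κ ((x - 1) ^ 2) = 0 := by
    rw [sq, ← rmul_rmul, ← hN, ← mact_rmul, ← hN, ← mact_mul, ← sq, hA, mact_zero]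
  exact sub_eq_zero.mp (pow_eq_zero_iff two_ne_zero |>.mp ((rmul_eq_zero_iff hκ).mp hsq))

/-- `h₀` and `h₁` say that the first column of `N²` vanishes, for `N = [[a - 1, b], [c, d - 1]]`. -/
lemma qstar_eq_self_of_sq_eq_zero {a b c d : ℍ[ℝ]} (hcomm : qstar a * c = qstar c * a)
    (hdet : qstar a * d - qstar c * b = 1)
    (h₀ : (a - 1) * (a - 1) + b * c = 0) (h₁ : c * (a - 1) + (d - 1) * c = 0) :
    qstar c = c := by
  have key : (qstar a * d - qstar c * b) * c - qstar c =
      qstar a * (c * (a - 1) + (d - 1) * c) - qstar c * ((a - 1) * (a - 1) + b * c)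
        + 2 * (qstar a * c - qstar c * a) - (qstar a * c - qstar c * a) * a := by
    noncomm_ring
  rw [hdet, h₀, h₁, hcomm, sub_self] at key
  simpa [sub_eq_zero, eq_comm] using key

lemma exists_isSpinor_mact_eq_self {A : Matrix (Fin 2) (Fin 2) ℍ[ℝ]}
    (hac : IsParavector (A 0 0 * star (A 1 0))) (hdet : pdet A = 1) (hA : (A - 1) ^ 2 = 0) :
    ∃ κ, IsSpinor κ ∧ mact A κ = κ := by
  set κ₁ := mact (A - 1) (1, 0)
  have hκ₁ : κ₁ = (A 0 0 - 1, A 1 0) := by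
    ext <;> simp [κ₁, Matrix.sub_apply]
  have hfix₁ : mact (A - 1) κ₁ = 0 := by
    rw [← mact_mul, ← sq, hA, mact_zero]
  by_cases hzero : κ₁ = 0
  · exact ⟨(1, 0), ⟨by simp, by simp [IsParavector]⟩, (mact_eq_self_iff _ _).mpr hzero⟩
  refine ⟨κ₁, ⟨hzero, ?_⟩, (mact_eq_self_iff _ _).mpr hfix₁⟩
  have h₀ := congrArg Prod.fst hfix₁
  have h₁ := congrArg Prod.snd hfix₁
  simp only [hκ₁, fst_mact, snd_mact, Matrix.sub_apply, Matrix.one_apply_eq,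
    Matrix.one_apply_ne zero_ne_one, Matrix.one_apply_ne one_ne_zero, sub_zero,
    Prod.fst_zero, Prod.snd_zero] at h₀ h₁
  have hc : qstar (A 1 0) = A 1 0 :=
    qstar_eq_self_of_sq_eq_zero (qstar_mul_comm_of_isParavector hac) hdet h₀ h₁
  rw [hκ₁]
  exact hac.sub_one_mul_star (isParavector_iff_qstar_eq_self.mpr hc)

lemma sq_sub_one_eq_zero_of_mact_eq_self_of_snd_eq_zero {A : Matrix (Fin 2) (Fin 2) ℍ[ℝ]}
    (hdet : pdet A = 1) {ξ : ℍ[ℝ]} (hξ : ξ ≠ 0) (hfix : mact A (ξ, 0) = (ξ, 0)) :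
    (A - 1) ^ 2 = 0 := by
  have ha : A 0 0 = 1 := by
    simpa [hξ] using congrArg Prod.fst hfix
  have hc : A 1 0 = 0 := by
    simpa [hξ] using congrArg Prod.snd hfix
  have hd : A 1 1 = 1 := by
    simpa [pdet, ha, hc] using hdet
  rw [sub_one_fin_two, ha, hc, hd, sub_self]
  exact sq_fin_two_upper_eq_zero _

lemma sq_sub_one_eq_zero_of_mact_eq_self_of_snd_ne_zero {A : Matrix (Fin 2) (Fin 2) ℍ[ℝ]}
    (hac : IsParavector (A 0 0 * star (A 1 0))) (hdet : pdet A = 1) {ξ η : ℍ[ℝ]}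
    (hκ : IsParavector (ξ * star η)) (hη : η ≠ 0) (hfix : mact A (ξ, η) = (ξ, η)) :
    (A - 1) ^ 2 = 0 := by
  set v := ξ * η⁻¹
  have hv : qstar v = v := isParavector_iff_qstar_eq_self.mp hκ.mul_inv
  have hξ : ξ = v * η := (inv_mul_cancel_right₀ hη ξ).symm
  have hb : A 0 1 = v - A 0 0 * v := by
    have h := congrArg Prod.fst hfix
    rw [fst_mact, hξ, ← mul_assoc, ← add_mul] at h
    exact eq_sub_of_add_eq' (mul_right_cancel₀ hη h)
  have hd : A 1 1 = 1 - A 1 0 * v := by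
    have h := congrArg Prod.snd hfix
    rw [snd_mact, hξ, ← mul_assoc, ← add_mul] at h
    exact eq_sub_of_add_eq' (mul_right_cancel₀ hη (h.trans (one_mul η).symm))
  have hdet' : qstar (A 0 0) - qstar (A 1 0) * v = 1 := calc
    qstar (A 0 0) - qstar (A 1 0) * v
        = qstar (A 0 0) * (1 - A 1 0 * v) - qstar (A 1 0) * (v - A 0 0 * v)
          + (qstar (A 0 0) * A 1 0 - qstar (A 1 0) * A 0 0) * v := by noncomm_ring
    _ = 1 := by
      rw [qstar_mul_comm_of_isParavector hac, sub_self, zero_mul, add_zero, ← hb, ← hd]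
      exact hdet
  have ha : A 0 0 = 1 + v * A 1 0 := by
    have h := congrArg qstar hdet'
    rw [qstar_sub, qstar_mul, qstar_qstar, qstar_qstar, hv, qstar_one] at h
    exact eq_add_of_sub_eq h
  have hN : A - 1 = !![v * A 1 0, -(v * A 1 0 * v); A 1 0, -(A 1 0 * v)] := by
    rw [sub_one_fin_two, hb, hd, ha]
    ext i j : 1
    fin_cases i <;> fin_cases j <;> simp [add_mul, sub_eq_neg_add]
  rw [hN]
  exact sq_fin_two_rank_one_eq_zero _ _

lemma sq_sub_one_eq_zero_of_mact_eq_self {A : Matrix (Fin 2) (Fin 2) ℍ[ℝ]}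
    (hac : IsParavector (A 0 0 * star (A 1 0))) (hdet : pdet A = 1) {κ : ℍ[ℝ] × ℍ[ℝ]}
    (hκ : IsSpinor κ) (hfix : mact A κ = κ) : (A - 1) ^ 2 = 0 := by
  obtain ⟨ξ, η⟩ := κ
  obtain ⟨hne, hpara⟩ := hκ
  rcases eq_or_ne η 0 with rfl | hη
  · exact sq_sub_one_eq_zero_of_mact_eq_self_of_snd_eq_zero hdet
      (fun hξ => hne (by rw [hξ]; rfl)) hfix
  · exact sq_sub_one_eq_zero_of_mact_eq_self_of_snd_ne_zero hac hdet hpara hη hfix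

/-- For a Clifford matrix `A`:
(i) if `A` is a parabolic translation and `Aκ = κx` for some spinor `κ` and `x ∈ ℍ`,
then `x = 1`;
(ii) `A` is a parabolic translation iff `A ≠ 1` and `Aκ = κ` for some spinor `κ`. -/
theorem parabolic_on_spinors (A : Matrix (Fin 2) (Fin 2) ℍ[ℝ]) (hA : IsClifford A) :
    (∀ (κ : ℍ[ℝ] × ℍ[ℝ]) (x : ℍ[ℝ]), IsParabolic A → IsSpinor κ →
      mact A κ = rmul κ x → x = 1) ∧
    (IsParabolic A ↔ (A ≠ 1 ∧ ∃ κ : ℍ[ℝ] × ℍ[ℝ], IsSpinor κ ∧ mact A κ = κ)) := by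
  obtain ⟨⟨-, hac⟩, -, hdet⟩ := hA
  refine ⟨fun κ x hpar hκ hfix => eq_one_of_mact_eq_rmul hpar.2 hκ.1 hfix, ?_, ?_⟩
  · rintro ⟨hne, hsq⟩
    exact ⟨hne, exists_isSpinor_mact_eq_self hac hdet hsq⟩
  · rintro ⟨hne, κ, hκ, hfix⟩
    exact ⟨hne, sq_sub_one_eq_zero_of_mact_eq_self hac hdet hκ hfix⟩
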